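/- With ν as above, for every ε > 0 one has |∫_{|y₁−1|≥ε} (y₁−1) dν(y)| ≤ 2/π. -/

import Mathlib

/-!
On the horizontal axis `(u - 1)` times the density has the explicit primitive
`F u = (log |u - 1| - log (u + 1) - 2 / (u + 1)) / π`, and the vertical part contributes
`-2/π = F 0`. Hence the truncated integral equals `F (1 - ε) - F (1 + ε)` for `ε ≤ 1` and
`-F (1 + ε)` for `ε > 1`; elementary bounds on the logarithms (with `log 3 < 4/3` in the
second case) show that `π` times either is at most `2` in absolute value.
-/

open MeasureTheory Set Filter Topology Real

noncomputable section

def horizontalDensity (u : ℝ) : ℝ := 4 / π * u / ((1 - u) ^ 2 * (1 + u) ^ 2)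

def verticalDensity (v : ℝ) : ℝ := 4 / π * v / (1 + v ^ 2) ^ 2

/-- `Real.log` is even, so `log (u - 1)` is `log |u - 1|` and this is a primitive of
`(u - 1) * horizontalDensity u` on both sides of `u = 1`. -/
def horizontalPrimitive (u : ℝ) : ℝ := (log (u - 1) - log (u + 1) - 2 / (u + 1)) / π

end

theorem hasDerivAt_horizontalPrimitive {u : ℝ} (h₁ : u ≠ 1) (h₂ : u ≠ -1) :
    HasDerivAt horizontalPrimitive ((u - 1) * horizontalDensity u) u := by
  have hsub : u - 1 ≠ 0 := sub_ne_zero.2 h₁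
  have hadd : u + 1 ≠ 0 := by contrapose! h₂; linarith
  have hsub' : 1 - u ≠ 0 := sub_ne_zero.2 h₁.symm
  have hadd' : 1 + u ≠ 0 := by rwa [add_comm]
  have hlin₁ : HasDerivAt (fun x : ℝ => x - 1) 1 u := (hasDerivAt_id u).sub_const 1
  have hlin₂ : HasDerivAt (fun x : ℝ => x + 1) 1 u := (hasDerivAt_id u).add_const 1
  have h := (((hlin₁.log hsub).sub (hlin₂.log hadd)).sub
    ((hasDerivAt_const u (2 : ℝ)).div hlin₂ hadd)).div_const π
  refine h.congr_deriv ?_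
  unfold horizontalDensity
  field_simp
  ring

@[simp]
theorem horizontalPrimitive_zero : horizontalPrimitive 0 = -(2 / π) := by
  simp [horizontalPrimitive, neg_div]

theorem tendsto_horizontalPrimitive_atTop : Tendsto horizontalPrimitive atTop (𝓝 0) := by
  have hfrac : Tendsto (fun x : ℝ => 2 / (x + 1)) atTop (𝓝 0) :=
    tendsto_const_nhds.div_atTop (tendsto_atTop_add_const_right _ 1 tendsto_id)
  have hlog : Tendsto (fun x : ℝ => log (1 - 2 / (x + 1))) atTop (𝓝 0) := by
    have h : Tendsto (fun x : ℝ => 1 - 2 / (x + 1)) atTop (𝓝 1) := by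
      simpa using hfrac.const_sub 1
    simpa [Function.comp_def] using (continuousAt_log one_ne_zero).tendsto.comp h
  have hlog' : Tendsto (fun x : ℝ => log (x - 1) - log (x + 1)) atTop (𝓝 0) := by
    refine hlog.congr' ?_
    filter_upwards [eventually_gt_atTop (1 : ℝ)] with x hx
    rw [← log_div (by linarith) (by linarith)]
    congr 1
    field_simp
    ring
  unfold horizontalPrimitive
  simpa using (hlog'.sub hfrac).div_const π

theorem mul_horizontalDensity_nonneg {u : ℝ} (hu : 1 ≤ u) :
    0 ≤ (u - 1) * horizontalDensity u := by
  unfold horizontalDensity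
  have := pi_pos
  exact mul_nonneg (by linarith) (by positivity)

theorem continuousOn_mul_horizontalDensity :
    ContinuousOn (fun u => (u - 1) * horizontalDensity u) (Ioo (-1) 1) := by
  unfold horizontalDensity
  refine (continuousOn_id.sub continuousOn_const).mul
    (ContinuousOn.div (by fun_prop) (by fun_prop) fun x hx => ?_)
  have h₁ : 1 - x ≠ 0 := by linarith [hx.2]
  have h₂ : 1 + x ≠ 0 := by linarith [hx.1]
  positivity

theorem integrableOn_Icc_mul_horizontalDensity {a b : ℝ} (ha : -1 < a) (hb : b < 1) :
    IntegrableOn (fun u => (u - 1) * horizontalDensity u) (Icc a b) :=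
  (continuousOn_mul_horizontalDensity.mono (Icc_subset_Ioo ha hb)).integrableOn_Icc

theorem integral_Icc_mul_horizontalDensity {a b : ℝ} (ha : -1 < a) (hab : a ≤ b) (hb : b < 1) :
    ∫ u in Icc a b, (u - 1) * horizontalDensity u
      = horizontalPrimitive b - horizontalPrimitive a := by
  rw [integral_Icc_eq_integral_Ioc, ← intervalIntegral.integral_of_le hab]
  refine intervalIntegral.integral_eq_sub_of_hasDerivAt (fun x hx => ?_)
    ((intervalIntegrable_iff_integrableOn_Icc_of_le hab).2
      (integrableOn_Icc_mul_horizontalDensity ha hb))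
  rw [uIcc_of_le hab] at hx
  exact hasDerivAt_horizontalPrimitive (by linarith [hx.2]) (by linarith [hx.1])

theorem hasDerivAt_horizontalPrimitive_of_one_lt {u : ℝ} (hu : 1 < u) :
    HasDerivAt horizontalPrimitive ((u - 1) * horizontalDensity u) u :=
  hasDerivAt_horizontalPrimitive hu.ne' (by linarith)

theorem integrableOn_Ici_mul_horizontalDensity {a : ℝ} (ha : 1 < a) :
    IntegrableOn (fun u => (u - 1) * horizontalDensity u) (Ici a) :=
  (integrableOn_Ici_iff_integrableOn_Ioi).2 <| integrableOn_Ioi_deriv_of_nonneg'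
    (fun x hx => hasDerivAt_horizontalPrimitive_of_one_lt (ha.trans_le hx))
    (fun x hx => mul_horizontalDensity_nonneg (ha.trans hx).le) tendsto_horizontalPrimitive_atTop

theorem integral_Ici_mul_horizontalDensity {a : ℝ} (ha : 1 < a) :
    ∫ u in Ici a, (u - 1) * horizontalDensity u = -horizontalPrimitive a := by
  rw [integral_Ici_eq_integral_Ioi, integral_Ioi_of_hasDerivAt_of_nonneg'
    (fun x hx => hasDerivAt_horizontalPrimitive_of_one_lt (ha.trans_le hx))
    (fun x hx => mul_horizontalDensity_nonneg (ha.trans hx).le) tendsto_horizontalPrimitive_atTop,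
    zero_sub]

theorem integral_Ici_verticalDensity : ∫ v in Ici (0 : ℝ), verticalDensity v = 2 / π := by
  have hπ := pi_pos
  have hderiv (v : ℝ) :
      HasDerivAt (fun x : ℝ => -(2 / π) * (1 + x ^ 2)⁻¹) (verticalDensity v) v := by
    have h : HasDerivAt (fun x : ℝ => 1 + x ^ 2) (2 * v) v := by
      simpa using (hasDerivAt_pow 2 v).const_add 1
    refine ((h.inv (by positivity)).const_mul (-(2 / π))).congr_deriv ?_
    unfold verticalDensity
    field_simp
    ring
  have htendsto : Tendsto (fun x : ℝ => -(2 / π) * (1 + x ^ 2)⁻¹) atTop (𝓝 0) := by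
    simpa using ((tendsto_atTop_add_const_left _ 1
      (tendsto_pow_atTop two_ne_zero)).inv_tendsto_atTop).const_mul (-(2 / π))
  rw [integral_Ici_eq_integral_Ioi, integral_Ioi_of_hasDerivAt_of_nonneg' (fun x _ => hderiv x)
    (fun x hx => by unfold verticalDensity; have := (mem_Ioi.1 hx).le; positivity) htendsto]
  simp

theorem setOf_nonneg_le_abs_sub_one {ε : ℝ} (hε : 0 < ε) :
    {u : ℝ | 0 ≤ u ∧ ε ≤ |u - 1|} = Icc 0 (1 - ε) ∪ Ici (1 + ε) := by
  ext u
  simp only [mem_ofPred_eq, mem_union, mem_Icc, mem_Ici, le_abs]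
  constructor
  · rintro ⟨h₀, h | h⟩
    · exact Or.inr (by linarith)
    · exact Or.inl ⟨h₀, by linarith⟩
  · rintro (⟨h₀, h⟩ | h)
    · exact ⟨h₀, Or.inr (by linarith)⟩
    · exact ⟨by linarith, Or.inl (by linarith)⟩

theorem abs_horizontalPrimitive_sub_le {ε : ℝ} (hε : 0 < ε) (hε₁ : ε ≤ 1) :
    |horizontalPrimitive (1 - ε) - horizontalPrimitive (1 + ε)| ≤ 2 / π := by
  have hπ := pi_pos
  have hX : |log (2 + ε) - log (2 - ε) + (2 / (2 + ε) - 2 / (2 - ε))| ≤ 2 := by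
    have hlog_add : log (2 + ε) ≤ 1 + ε := by
      linarith [log_le_sub_one_of_pos (by linarith : 0 < 2 + ε)]
    have hlog_sub : 0 ≤ log (2 - ε) := log_nonneg (by linarith)
    have hlog_mono : log (2 - ε) ≤ log (2 + ε) := log_le_log (by linarith) (by linarith)
    have hfrac_mono : 2 / (2 + ε) ≤ 2 / (2 - ε) := by gcongr <;> linarith
    have hfrac_le : 2 / (2 - ε) ≤ 2 := by rw [div_le_iff₀ (by linarith)]; nlinarith
    have hfrac_nonneg : 0 ≤ 2 / (2 + ε) := by positivity
    rw [abs_le]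
    constructor <;> linarith
  have heq : horizontalPrimitive (1 - ε) - horizontalPrimitive (1 + ε)
      = (log (2 + ε) - log (2 - ε) + (2 / (2 + ε) - 2 / (2 - ε))) / π := by
    simp only [horizontalPrimitive, show 1 - ε - 1 = -ε by ring, log_neg_eq_log]
    ring_nf
  rw [heq, abs_div, abs_of_pos hπ]
  gcongr

theorem abs_horizontalPrimitive_le {ε : ℝ} (hε₁ : 1 ≤ ε) :
    |horizontalPrimitive (1 + ε)| ≤ 2 / π := by
  have hπ := pi_pos
  have hε : 0 < ε := by linarith
  have hlog : log (2 + ε) - log ε ≤ log 3 := by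
    rw [← log_div (by linarith) hε.ne']
    exact log_le_log (by positivity) ((div_le_iff₀ hε).2 (by linarith))
  have hlog_mono : log ε ≤ log (2 + ε) := log_le_log hε (by linarith)
  have hfrac : 2 / (2 + ε) ≤ 2 / 3 := by gcongr; linarith
  have hfrac_nonneg : 0 ≤ 2 / (2 + ε) := by positivity
  have hX : |log ε - log (2 + ε) - 2 / (2 + ε)| ≤ 2 := by
    rw [abs_le]
    constructor <;> linarith [log_three_lt_d9]
  rw [horizontalPrimitive, show 1 + ε - 1 = ε by ring, show 1 + ε + 1 = 2 + ε by ring,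
    abs_div, abs_of_pos hπ]
  gcongr

/-- With ν as in the paper (densities `(4/π)·u/((1-u)²(1+u)²)` on the horizontal
axis and `(4/π)·v/(1+v²)²` on the vertical axis, where `y₁ = 0` so `|y₁−1| = 1`),
for every ε > 0, `|∫_{|y₁−1|≥ε} (y₁−1) dν(y)| ≤ 2/π`. -/
theorem stmt6 (ε : ℝ) (hε : 0 < ε) :
    |(∫ u in {u : ℝ | 0 ≤ u ∧ ε ≤ |u - 1|},
        (u - 1) * ((4 / Real.pi) * u / ((1 - u) ^ 2 * (1 + u) ^ 2)))
      + (∫ v in {v : ℝ | 0 ≤ v ∧ ε ≤ |(0 : ℝ) - 1|},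
        ((0 : ℝ) - 1) * ((4 / Real.pi) * v / (1 + v ^ 2) ^ 2))| ≤ 2 / Real.pi := by
  show |(∫ u in _, (u - 1) * horizontalDensity u) + ∫ v in _, (0 - 1) * verticalDensity v| ≤ _
  rw [show |(0 : ℝ) - 1| = 1 by norm_num, setOf_nonneg_le_abs_sub_one hε,
    setIntegral_union (disjoint_left.2 fun x hx hx' => by linarith [hx.2, mem_Ici.1 hx'])
      measurableSet_Ici
      (integrableOn_Icc_mul_horizontalDensity (by norm_num) (by linarith))
      (integrableOn_Ici_mul_horizontalDensity (by linarith)),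
    integral_Ici_mul_horizontalDensity (by linarith), integral_const_mul]
  rcases le_or_gt ε 1 with hε₁ | hε₁
  · have hvert : {v : ℝ | 0 ≤ v ∧ ε ≤ 1} = Ici 0 := by ext; simp [hε₁]
    rw [hvert, integral_Ici_verticalDensity,
      integral_Icc_mul_horizontalDensity (by norm_num) (by linarith) (by linarith),
      horizontalPrimitive_zero]
    convert abs_horizontalPrimitive_sub_le hε hε₁ using 2
    ring
  · have hvert : {v : ℝ | 0 ≤ v ∧ ε ≤ 1} = ∅ := by ext; simp [hε₁]
    rw [hvert, Icc_eq_empty (by linarith)]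
    simpa using abs_horizontalPrimitive_le hε₁.le
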